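/- The commutative square of abelian groups with top-left ℤ, top-right ∏_p ℤ_p (the product over all primes p, with the map given diagonally by the canonical inclusions ℤ → ℤ_p), bottom-left ℚ (with the map the inclusion ℤ → ℚ), and bottom-right ℚ ⊗_ℤ ∏_p ℤ_p (with maps q ↦ q ⊗ 1 and x ↦ 1 ⊗ x) is a pullback square. Equivalently: if x = (x_p)_p ∈ ∏_p ℤ_p and q ∈ ℚ satisfy 1 ⊗ x = q ⊗ 1 in ℚ ⊗_ℤ ∏_p ℤ_p, then there is an integer n with q = n and x_p = n for every prime p. -/
import Mathlib

open scoped TensorProduct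

instance (p : Nat.Primes) : Fact (Nat.Prime (p : ℕ)) := ⟨p.2⟩

noncomputable def hasseB (p : Nat.Primes) :
    ℚ →ₗ[ℤ] (∀ q : Nat.Primes, ℤ_[q]) →ₗ[ℤ] ℚ_[p] :=
  LinearMap.mk₂ ℤ (fun r m => r • ((m p : ℤ_[p]) : ℚ_[p]))
    (fun r s m => by simp [add_smul])
    (fun z r m => by
      simp only [zsmul_eq_mul, Rat.smul_def, push_cast]
      ring)
    (fun r m₁ m₂ => by simp [smul_add])
    (fun z r m => by
      simp only [Pi.smul_apply, zsmul_eq_mul, Rat.smul_def, PadicInt.coe_mul,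
        PadicInt.coe_intCast]
      ring)

theorem hasse_aux (x : ∀ p : Nat.Primes, ℤ_[p]) (q : ℚ)
    (h : (q ⊗ₜ[ℤ] (1 : ∀ p : Nat.Primes, ℤ_[p]) :
        ℚ ⊗[ℤ] (∀ p : Nat.Primes, ℤ_[p])) = 1 ⊗ₜ[ℤ] x)
    (p : Nat.Primes) : ((q : ℚ_[p])) = (x p : ℚ_[p]) := by
  have := congrArg (TensorProduct.lift (hasseB p)) h
  simpa [hasseB, TensorProduct.lift.tmul, Rat.smul_one_eq_cast] using this

/-- The Hasse square for the integers is a pullback: if `q ⊗ 1 = 1 ⊗ x` in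
`ℚ ⊗_ℤ ∏_p ℤ_p`, then `q` is an integer `n` and every component `x_p` equals `n`. -/
theorem hasse_square_pullback (x : ∀ p : Nat.Primes, ℤ_[p]) (q : ℚ)
    (h : (q ⊗ₜ[ℤ] (1 : ∀ p : Nat.Primes, ℤ_[p]) :
        ℚ ⊗[ℤ] (∀ p : Nat.Primes, ℤ_[p])) = 1 ⊗ₜ[ℤ] x) :
    ∃ n : ℤ, q = (n : ℚ) ∧ ∀ p : Nat.Primes, x p = (n : ℤ_[p]) := by
  have key : ∀ p : Nat.Primes, ((q.num : ℤ_[p])) = (q.den : ℤ_[p]) * x p := by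
    intro p
    have hq := hasse_aux x q h p
    have h2 : ((q.num : ℚ_[p])) = (q.den : ℚ_[p]) * (x p : ℚ_[p]) := by
      rw [← hq, Rat.cast_def]
      rw [mul_comm, div_mul_cancel₀]
      exact_mod_cast q.den_nz
    exact Subtype.coe_injective (by push_cast; exact_mod_cast h2)
  have hden : q.den = 1 := by
    by_contra hd
    obtain ⟨p, hp, hpd⟩ := Nat.exists_prime_and_dvd hd
    set P : Nat.Primes := ⟨p, hp⟩ with hP
    haveI : Fact (Nat.Prime (P : ℕ)) := ⟨hp⟩
    have h1 : ‖((q.num : ℤ) : ℤ_[(P : ℕ)])‖ < 1 := by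
      have hk := key P
      rw [show ((q.num : ℤ_[(P : ℕ)])) = ((q.num : ℤ) : ℤ_[(P : ℕ)]) from by push_cast; rfl] at hk
      rw [hk]
      calc ‖((q.den : ℤ_[(P : ℕ)])) * x P‖
          ≤ ‖((q.den : ℤ_[(P : ℕ)]))‖ * 1 := by
            rw [norm_mul]
            exact mul_le_mul_of_nonneg_left (PadicInt.norm_le_one _) (norm_nonneg _)
        _ = ‖(((q.den : ℤ) : ℤ_[(P : ℕ)]))‖ := by rw [mul_one]; norm_cast
        _ < 1 := (PadicInt.norm_int_lt_one_iff_dvd _).mpr (Int.natCast_dvd_natCast.mpr hpd)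
    have h2 : ((P : ℕ) : ℤ) ∣ q.num := (PadicInt.norm_int_lt_one_iff_dvd _).mp h1
    have hred := q.reduced
    have hpn : p ∣ q.num.natAbs := Int.natCast_dvd_natCast.mp (Int.dvd_natAbs.mpr h2)
    exact hp.not_dvd_one (hred ▸ Nat.dvd_gcd hpn hpd)
  refine ⟨q.num, ?_, fun p => ?_⟩
  · conv_lhs => rw [← Rat.num_div_den q]
    rw [hden]; simp
  · have := key p
    rw [hden] at this
    simpa using this.symm
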